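/- arXiv:1603.09142 — 2 statements merged into one kernel-verified Lean document; each statement's English description precedes it below -/
import Mathlib

section
/- Let Σ be a countable set and let G : Σ × Σ → ℝ satisfy G(x,y) ≥ 0 for all x ≠ y and, for each x, the family (G(x,y))_{y∈Σ} is summable with Σ_y G(x,y) = 0. Let ε > 0, let h : Σ → ℝ, and define φ_ε(z) := ε^{-1}(e^{-εz} − 1 + εz) and f_ε(x) := ε^{-1}(1 − e^{-ε h(x)}). Fix x ∈ Σ and assume that the families (G(x,y)(h(y) − h(x)))_{y} and (G(x,y) φ_ε(h(y) − h(x)))_{y} are summable. Then the family (G(x,y)(f_ε(y) − f_ε(x)))_{y} is summable, and Σ_y G(x,y)(f_ε(y) − f_ε(x)) ≥ 0 if and only if Σ_y G(x,y) φ_ε(h(y) − h(x)) ≤ Σ_y G(x,y)(h(y) − h(x)). -/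
/-- Transformation of submartingales (Lemma A.1): for a Q-matrix `G` on a countable set,
`ε > 0`, a function `h`, `φ_ε(z) = ε⁻¹(e^{-εz} - 1 + εz)` and `f_ε(x) = ε⁻¹(1 - e^{-ε h x})`,
if at some point `x` the families `G x y (h y - h x)` and `G x y φ_ε(h y - h x)` are summable,
then so is `G x y (f_ε y - f_ε x)`, and `G f_ε (x) ≥ 0` iff `H_ε h (x) ≤ G h (x)`. -/
theorem submartingale_transformation {S : Type*} [Countable S] (G : S → S → ℝ)
    (hoff : ∀ x y : S, x ≠ y → 0 ≤ G x y)
    (hrow : ∀ x : S, Summable (G x)) (hzero : ∀ x : S, ∑' y, G x y = 0)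
    (ε : ℝ) (hε : 0 < ε) (h : S → ℝ)
    (φ : ℝ → ℝ) (hφ : ∀ z : ℝ, φ z = ε⁻¹ * (Real.exp (-ε * z) - 1 + ε * z))
    (f : S → ℝ) (hf : ∀ x : S, f x = ε⁻¹ * (1 - Real.exp (-ε * h x)))
    (x : S)
    (hs1 : Summable (fun y => G x y * (h y - h x)))
    (hs2 : Summable (fun y => G x y * φ (h y - h x))) :
    Summable (fun y => G x y * (f y - f x)) ∧
      (0 ≤ ∑' y, G x y * (f y - f x) ↔
        ∑' y, G x y * φ (h y - h x) ≤ ∑' y, G x y * (h y - h x)) := by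
  set c := Real.exp (-ε * h x) with hc
  have hcpos : 0 < c := Real.exp_pos _
  have key : ∀ y, G x y * (f y - f x)
      = c * (G x y * (h y - h x) - G x y * φ (h y - h x)) := by
    intro y
    have hexp : Real.exp (-ε * (h y - h x)) * Real.exp (-ε * h x)
        = Real.exp (-ε * h y) := by
      rw [← Real.exp_add]; ring_nf
    have hε' : ε ≠ 0 := ne_of_gt hε
    rw [hf, hf, hφ, hc]
    simp only [neg_mul] at hexp ⊢
    field_simp
    linear_combination G x y * hexp
  have hsum : Summable (fun y => G x y * (f y - f x)) := by
    simp only [key]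
    exact (hs1.sub hs2).mul_left c
  refine ⟨hsum, ?_⟩
  have htsum : ∑' y, G x y * (f y - f x)
      = c * ((∑' y, G x y * (h y - h x)) - ∑' y, G x y * φ (h y - h x)) := by
    simp only [key]
    rw [tsum_mul_left, Summable.tsum_sub hs1 hs2]
  rw [htsum]
  constructor
  · intro H; nlinarith
  · intro H; nlinarith
end

section
/- Let Λ be a countable set, let a : Λ × Λ → ℝ satisfy a(i,j) ≥ 0 and, for each i, the family (a(i,j))_{j∈Λ} is summable. Let δ ≥ 0, let 0 < ε < 2, and set ε₁ := ε/(2 − ε) and ε₂ := ε e^{ε}/(2 + ε e^{ε}). Let h be a real-valued function on finite subsets of Λ such that for every finite A: 0 ≤ h(A ∪ {j}) − h(A) ≤ 1 for all j ∉ A, and 0 ≤ h(A) − h(A \ {i}) ≤ 1 for all i ∈ A. Define φ_ε(z) := ε^{-1}(e^{-εz} − 1 + εz). Then for every finite A ⊆ Λ: (1 + ε₁) Σ_{i∈A} Σ_{j∉A} a(i,j) φ_ε(h(A∪{j}) − h(A)) + (1 − ε₂) δ Σ_{i∈A} φ_ε(h(A\{i}) − h(A)) ≤ ε₁ Σ_{i∈A}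 Σ_{j∉A} a(i,j) (h(A∪{j}) − h(A)) + ε₂ δ Σ_{i∈A} (h(A) − h(A\{i})). -/
/-!
Both sides split into an infection part and a recovery part, compared term by term. The map
`z ↦ e^{-εz} - 1 + εz` is convex and vanishes at `0`, so `φ_ε(z) ≤ |z| φ_ε(±1)` for `z ∈ [-1, 1]`.
The endpoint bounds `φ_ε(1) ≤ ε/2` and `φ_ε(-1) ≤ ε e^ε/2` are second-order Taylor estimates, and
`ε₁`, `ε₂` are chosen exactly so that `(1 + ε₁) ε/2 = ε₁` and `(1 - ε₂) ε e^ε/2 = ε₂`.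
-/

open Real

namespace Real

theorem exp_neg_sub_one_add_le_sq_div_two {x : ℝ} (hx : 0 ≤ x) : exp (-x) - 1 + x ≤ x ^ 2 / 2 := by
  have hexp := quadratic_le_exp_of_nonneg hx
  -- `(1 - x + x²/2)(1 + x + x²/2) = 1 + x⁴/4 ≥ 1 = exp (-x) * exp x`
  have hprod : exp (-x) * exp x = 1 := by rw [← exp_add, neg_add_cancel, exp_zero]
  nlinarith [exp_pos (-x), pow_nonneg hx 4]

theorem one_sub_sq_div_two_le_one_add_mul_exp_neg {x : ℝ} (hx : 0 ≤ x) :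
    1 - x ^ 2 / 2 ≤ (1 + x) * exp (-x) := by
  -- `(1 + y) e^{-y} + y²/2` has derivative `y (1 - e^{-y}) ≥ 0`
  have hderiv (y : ℝ) : HasDerivAt (fun y => (1 + y) * exp (-y) + y ^ 2 / 2)
      (y * (1 - exp (-y))) y := by
    have := (((hasDerivAt_id y).const_add 1).mul (hasDerivAt_neg y).exp).add
      ((hasDerivAt_pow 2 y).div_const 2)
    exact this.congr_deriv <| by
      simp only [one_mul, id_eq, Nat.cast_ofNat, Nat.add_one_sub_one, pow_one]; ring
  have hmono := monotone_of_hasDerivAt_nonneg hderiv fun y => by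
    rcases le_total 0 y with hy | hy
    · exact mul_nonneg hy (sub_nonneg.2 (exp_le_one_iff.2 (neg_nonpos.2 hy)))
    · exact mul_nonneg_of_nonpos_of_nonpos hy (sub_nonpos.2 (one_le_exp (neg_nonneg.2 hy)))
  have := hmono hx
  simp only [add_zero, neg_zero, exp_zero, one_mul, ne_eq, OfNat.ofNat_ne_zero,
    not_false_eq_true, zero_pow, zero_div] at this
  linarith

theorem exp_sub_one_sub_le_sq_div_two_mul_exp {x : ℝ} (hx : 0 ≤ x) :
    exp x - 1 - x ≤ x ^ 2 / 2 * exp x := by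
  have h := mul_le_mul_of_nonneg_right (one_sub_sq_div_two_le_one_add_mul_exp_neg hx)
    (exp_pos x).le
  rw [mul_assoc, ← exp_add, neg_add_cancel, exp_zero] at h
  linarith

theorem exp_mul_sub_one_sub_mul_le {t : ℝ} (c : ℝ) (ht₀ : 0 ≤ t) (ht₁ : t ≤ 1) :
    exp (t * c) - 1 - t * c ≤ t * (exp c - 1 - c) := by
  have := convexOn_exp.2 (Set.mem_univ 0) (Set.mem_univ c) (sub_nonneg.2 ht₁) ht₀
    (sub_add_cancel 1 t)
  simp only [smul_eq_mul, mul_zero, zero_add, exp_zero, mul_one] at this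
  linarith

end Real

noncomputable def phi (ε z : ℝ) : ℝ := ε⁻¹ * (exp (-ε * z) - 1 + ε * z)

section phi

variable {ε : ℝ}

theorem phi_nonneg (hε : 0 ≤ ε) (z : ℝ) : 0 ≤ phi ε z :=
  mul_nonneg (inv_nonneg.2 hε) (by linarith [add_one_le_exp (-ε * z)])

theorem phi_le_self (hε : 0 ≤ ε) {z : ℝ} (hz : 0 ≤ z) : phi ε z ≤ z := by
  have : exp (-ε * z) ≤ 1 := exp_le_one_iff.2 (by nlinarith)
  calc phi ε z ≤ ε⁻¹ * (ε * z) := mul_le_mul_of_nonneg_left (by linarith) (inv_nonneg.2 hε)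
    _ ≤ z := by rw [← mul_assoc]; exact mul_le_of_le_one_left hz (inv_mul_le_one_of_le₀ le_rfl hε)

theorem phi_mul_le (hε : 0 ≤ ε) {t : ℝ} (z : ℝ) (ht₀ : 0 ≤ t) (ht₁ : t ≤ 1) :
    phi ε (t * z) ≤ t * phi ε z := by
  have := exp_mul_sub_one_sub_mul_le (-ε * z) ht₀ ht₁
  unfold phi
  rw [mul_left_comm t, mul_left_comm (-ε)]
  exact mul_le_mul_of_nonneg_left (by linarith) (inv_nonneg.2 hε)

theorem phi_one_le (hε : 0 ≤ ε) : phi ε 1 ≤ ε / 2 := by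
  have := exp_neg_sub_one_add_le_sq_div_two hε
  calc phi ε 1 ≤ ε⁻¹ * (ε ^ 2 / 2) := by
        unfold phi; simp only [mul_one]; gcongr
    _ = ε / 2 := by rcases hε.eq_or_lt with rfl | hε <;> field_simp

theorem phi_neg_one_le (hε : 0 ≤ ε) : phi ε (-1) ≤ ε * exp ε / 2 := by
  have := exp_sub_one_sub_le_sq_div_two_mul_exp hε
  calc phi ε (-1) ≤ ε⁻¹ * (ε ^ 2 / 2 * exp ε) := by
        unfold phi; rw [neg_mul_neg, mul_one, mul_neg_one, ← sub_eq_add_neg]; gcongr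
    _ = ε * exp ε / 2 := by rcases hε.eq_or_lt with rfl | hε <;> field_simp

theorem one_add_mul_phi_le (hε : 0 < ε) (hε₂ : ε < 2) {z : ℝ} (hz₀ : 0 ≤ z) (hz₁ : z ≤ 1) :
    (1 + ε / (2 - ε)) * phi ε z ≤ ε / (2 - ε) * z := by
  have hphi : phi ε z ≤ z * (ε / 2) := by
    simpa using (phi_mul_le hε.le 1 hz₀ hz₁).trans
      (mul_le_mul_of_nonneg_left (phi_one_le hε.le) hz₀)
  have hpos : 0 < 2 - ε := by linarith
  calc (1 + ε / (2 - ε)) * phi ε z ≤ (1 + ε / (2 - ε)) * (z * (ε / 2)) := by gcongr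
    _ = ε / (2 - ε) * z := by field_simp; ring

theorem one_sub_mul_phi_neg_le (hε : 0 ≤ ε) {w : ℝ} (hw₀ : 0 ≤ w) (hw₁ : w ≤ 1) :
    (1 - ε * exp ε / (2 + ε * exp ε)) * phi ε (-w)
      ≤ ε * exp ε / (2 + ε * exp ε) * w := by
  have hphi : phi ε (-w) ≤ w * (ε * exp ε / 2) := by
    simpa using (phi_mul_le hε (-1) hw₀ hw₁).trans
      (mul_le_mul_of_nonneg_left (phi_neg_one_le hε) hw₀)
  have hpos : 0 < 2 + ε * exp ε := by positivity
  have hcoef : 0 ≤ 1 - ε * exp ε / (2 + ε * exp ε) := by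
    rw [sub_nonneg, div_le_one hpos]; linarith
  calc (1 - ε * exp ε / (2 + ε * exp ε)) * phi ε (-w)
      ≤ (1 - ε * exp ε / (2 + ε * exp ε)) * (w * (ε * exp ε / 2)) := by gcongr
    _ = ε * exp ε / (2 + ε * exp ε) * w := by field_simp; ring

end phi

section weighted

variable {ι : Type*} {a u v : ι → ℝ}

theorem Summable.mul_of_abs_le (hs : Summable a) (ha : ∀ j, 0 ≤ a j) {C : ℝ}
    (hu : ∀ j, |u j| ≤ C) : Summable fun j => a j * u j :=
  (hs.mul_right C).of_norm_bounded fun j => by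
    rw [norm_mul, Real.norm_of_nonneg (ha j)]
    exact mul_le_mul_of_nonneg_left (hu j) (ha j)

theorem mul_tsum_le_mul_tsum (hs : Summable a) (ha : ∀ j, 0 ≤ a j) {C D c d : ℝ}
    (hu : ∀ j, |u j| ≤ C) (hv : ∀ j, |v j| ≤ D) (huv : ∀ j, c * u j ≤ d * v j) :
    c * ∑' j, a j * u j ≤ d * ∑' j, a j * v j := by
  rw [← tsum_mul_left, ← tsum_mul_left]
  refine ((hs.mul_of_abs_le ha hu).mul_left c).tsum_le_tsum (fun j => ?_)
    ((hs.mul_of_abs_le ha hv).mul_left d)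
  rw [mul_left_comm, mul_left_comm d]
  exact mul_le_mul_of_nonneg_left (huv j) (ha j)

end weighted

theorem drift_condition_estimate_general {Λ : Type*} [DecidableEq Λ]
    (a : Λ → Λ → ℝ) (ha : ∀ i j : Λ, 0 ≤ a i j) (hsum : ∀ i : Λ, Summable (a i))
    (δ : ℝ) (hδ : 0 ≤ δ)
    (ε : ℝ) (hε : 0 < ε) (hε2 : ε < 2)
    (ε₁ ε₂ : ℝ) (hε₁ : ε₁ = ε / (2 - ε))
    (hε₂ : ε₂ = ε * Real.exp ε / (2 + ε * Real.exp ε))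
    (h : Finset Λ → ℝ)
    (hinc : ∀ (A : Finset Λ) (j : Λ), j ∉ A →
      0 ≤ h (insert j A) - h A ∧ h (insert j A) - h A ≤ 1)
    (hdec : ∀ (A : Finset Λ) (i : Λ), i ∈ A →
      0 ≤ h A - h (A.erase i) ∧ h A - h (A.erase i) ≤ 1)
    (φ : ℝ → ℝ) (hφ : ∀ z : ℝ, φ z = ε⁻¹ * (Real.exp (-ε * z) - 1 + ε * z))
    (A : Finset Λ) :
    (1 + ε₁) * ∑ i ∈ A, ∑' j : {j : Λ // j ∉ A}, a i j.1 * φ (h (insert j.1 A) - h A)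
        + (1 - ε₂) * δ * ∑ i ∈ A, φ (h (A.erase i) - h A)
      ≤ ε₁ * ∑ i ∈ A, ∑' j : {j : Λ // j ∉ A}, a i j.1 * (h (insert j.1 A) - h A)
        + ε₂ * δ * ∑ i ∈ A, (h A - h (A.erase i)) := by
  subst hε₁ hε₂
  obtain rfl : φ = phi ε := funext hφ
  have hinfection (i : Λ) : (1 + ε / (2 - ε)) * ∑' j : {j : Λ // j ∉ A},
      a i j.1 * phi ε (h (insert j.1 A) - h A)
        ≤ ε / (2 - ε) * ∑' j : {j : Λ // j ∉ A}, a i j.1 * (h (insert j.1 A) - h A) := by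
    refine mul_tsum_le_mul_tsum ((hsum i).subtype _) (fun j => ha i j.1) (C := 1) (D := 1)
      (fun j => ?_) (fun j => ?_) (fun j => ?_) <;> obtain ⟨hz₀, hz₁⟩ := hinc A j.1 j.2
    · rw [abs_of_nonneg (phi_nonneg hε.le _)]; exact (phi_le_self hε.le hz₀).trans hz₁
    · rwa [abs_of_nonneg hz₀]
    · exact one_add_mul_phi_le hε hε2 hz₀ hz₁
  have hrecovery (i : Λ) (hi : i ∈ A) : (1 - ε * exp ε / (2 + ε * exp ε)) *
      phi ε (h (A.erase i) - h A) ≤ ε * exp ε / (2 + ε * exp ε) * (h A - h (A.erase i)) := by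
    obtain ⟨hw₀, hw₁⟩ := hdec A i hi
    simpa only [neg_sub] using one_sub_mul_phi_neg_le hε.le hw₀ hw₁
  have hinfection_sum := Finset.sum_le_sum fun i (_ : i ∈ A) => hinfection i
  have hrecovery_sum := Finset.sum_le_sum hrecovery
  rw [← Finset.mul_sum, ← Finset.mul_sum] at hinfection_sum hrecovery_sum
  linarith [mul_le_mul_of_nonneg_left hrecovery_sum hδ]

/-- The core estimate in the proof of sharpness of the phase transition: for a function `h`
on finite subsets of `Λ` with increments in `[0,1]`, summable nonnegative infection rates `a`,
recovery rate `δ ≥ 0`, `0 < ε < 2`, `ε₁ = ε/(2-ε)`, `ε₂ = ε e^ε/(2 + ε e^ε)` and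
`φ_ε(z) = ε⁻¹(e^{-εz} - 1 + εz)`, the `φ_ε`-transform of the perturbed generator is dominated
by the difference of the perturbed and unperturbed generators. -/
theorem drift_condition_estimate {Λ : Type*} [Countable Λ] [DecidableEq Λ]
    (a : Λ → Λ → ℝ) (ha : ∀ i j : Λ, 0 ≤ a i j) (hsum : ∀ i : Λ, Summable (a i))
    (δ : ℝ) (hδ : 0 ≤ δ)
    (ε : ℝ) (hε : 0 < ε) (hε2 : ε < 2)
    (ε₁ ε₂ : ℝ) (hε₁ : ε₁ = ε / (2 - ε))
    (hε₂ : ε₂ = ε * Real.exp ε / (2 + ε * Real.exp ε))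
    (h : Finset Λ → ℝ)
    (hinc : ∀ (A : Finset Λ) (j : Λ), j ∉ A →
      0 ≤ h (insert j A) - h A ∧ h (insert j A) - h A ≤ 1)
    (hdec : ∀ (A : Finset Λ) (i : Λ), i ∈ A →
      0 ≤ h A - h (A.erase i) ∧ h A - h (A.erase i) ≤ 1)
    (φ : ℝ → ℝ) (hφ : ∀ z : ℝ, φ z = ε⁻¹ * (Real.exp (-ε * z) - 1 + ε * z))
    (A : Finset Λ) :
    (1 + ε₁) * ∑ i ∈ A, ∑' j : {j : Λ // j ∉ A}, a i j.1 * φ (h (insert j.1 A) - h A)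
        + (1 - ε₂) * δ * ∑ i ∈ A, φ (h (A.erase i) - h A)
      ≤ ε₁ * ∑ i ∈ A, ∑' j : {j : Λ // j ∉ A}, a i j.1 * (h (insert j.1 A) - h A)
        + ε₂ * δ * ∑ i ∈ A, (h A - h (A.erase i)) :=
  drift_condition_estimate_general a ha hsum δ hδ ε hε hε2 ε₁ ε₂ hε₁ hε₂ h hinc hdec φ hφ A
end
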